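/- Let Φ be the non-selective measurement channel associated with a complete family of pairwise orthogonal projections {P_a} on ℂ^n. Then for every complex n×n matrix ρ, ‖Φ(ρ)‖₂ ≤ ‖ρ‖₂, with equality if and only if Φ(ρ) = ρ. -/

import Mathlib

/-!
For the Hilbert–Schmidt inner product `⟪X, Y⟫ = Tr (X† Y)` the channel `Φ` is idempotent (the
`P a` are projections with `P a * P b = 0` for `a ≠ b`) and self-adjoint (cyclicity of the
trace), i.e. an orthogonal projection of the Hilbert space of matrices. Such a projection
shrinks norms and preserves the norm exactly of the vectors it fixes, by Pythagoras
`‖ρ‖² = ‖Φ ρ‖² + ‖ρ - Φ ρ‖²`; and `‖·‖₂` is the Hilbert–Schmidt norm since `Tr |X|² = Tr X† X`.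
-/

open Matrix Kronecker
open scoped ComplexOrder

noncomputable section

variable {n : Type*} [Fintype n] [DecidableEq n]

/-- `|X| = (X† X)^{1/2}`, the positive semidefinite absolute value of a matrix. -/
def matAbs (X : Matrix n n ℂ) : Matrix n n ℂ :=
  ((Matrix.posSemidef_conjTranspose_mul_self X).1.eigenvectorUnitary : Matrix n n ℂ) *
    diagonal (((↑) : ℝ → ℂ) ∘ (√·) ∘ (Matrix.posSemidef_conjTranspose_mul_self X).1.eigenvalues) *
    (star (Matrix.posSemidef_conjTranspose_mul_self X).1.eigenvectorUnitary : Matrix n n ℂ)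

/-- `Tr |X|^p`, with the `p`-th power taken through the functional calculus. -/
def traceAbsPow (p : ℝ) (X : Matrix n n ℂ) : ℝ :=
  (Matrix.trace (cfc (fun x : ℝ => x ^ p) (matAbs X))).re

/-- The Schatten `p`-norm `‖X‖_p = (Tr |X|^p)^(1/p)`. -/
def schatten (p : ℝ) (X : Matrix n n ℂ) : ℝ :=
  (traceAbsPow p X) ^ (1 / p)

/-- Matrix square root via the functional calculus (agrees with the positive semidefinite
square root on positive semidefinite matrices). -/
def msqrt (X : Matrix n n ℂ) : Matrix n n ℂ := cfc Real.sqrt X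

/-- Matrix natural logarithm via the functional calculus. -/
def mlog (X : Matrix n n ℂ) : Matrix n n ℂ := cfc Real.log X

/-- Von Neumann entropy `S(ρ) = -Tr(ρ log ρ)`. -/
def vnEntropy (ρ : Matrix n n ℂ) : ℝ := -(Matrix.trace (ρ * mlog ρ)).re

/-- Relative entropy `S(ρ‖σ) = Tr(ρ log ρ) - Tr(ρ log σ)`. -/
def relEnt (ρ σ : Matrix n n ℂ) : ℝ :=
  (Matrix.trace (ρ * mlog ρ)).re - (Matrix.trace (ρ * mlog σ)).re

/-- Uhlmann fidelity `F(ρ,σ) = (Tr|√σ √ρ|)²`. -/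
def fidelity (ρ σ : Matrix n n ℂ) : ℝ :=
  ((Matrix.trace (matAbs (msqrt σ * msqrt ρ))).re) ^ 2

/-- Partial trace over the second factor. -/
def ptraceE {S E : Type*} [Fintype E] (Ω : Matrix (S × E) (S × E) ℂ) : Matrix S S ℂ :=
  Matrix.of fun s s' => ∑ e, Ω (s, e) (s', e)

/-- Partial trace over the first factor. -/
def ptraceS {S E : Type*} [Fintype S] (Ω : Matrix (S × E) (S × E) ℂ) : Matrix E E ℂ :=
  Matrix.of fun e e' => ∑ s, Ω (s, e) (s, e')

open scoped InnerProductSpace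

def Matrix.hilbertSchmidtEquiv {m k 𝕜 : Type*} [RCLike 𝕜] :
    Matrix m k 𝕜 ≃ₗ[𝕜] EuclideanSpace 𝕜 (m × k) :=
  (Matrix.ofLinearEquiv 𝕜).symm ≪≫ₗ (LinearEquiv.curry 𝕜 𝕜 m k).symm ≪≫ₗ
    (WithLp.linearEquiv 2 𝕜 _).symm

namespace Matrix

variable {m k 𝕜 : Type*} [RCLike 𝕜]

@[simp]
lemma hilbertSchmidtEquiv_apply (X : Matrix m k 𝕜) (ij : m × k) :
    hilbertSchmidtEquiv X ij = X ij.1 ij.2 :=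
  rfl

lemma inner_hilbertSchmidtEquiv [Fintype m] [Fintype k] (X Y : Matrix m k 𝕜) :
    ⟪hilbertSchmidtEquiv X, hilbertSchmidtEquiv Y⟫_𝕜 = trace (Xᴴ * Y) := by
  simp only [PiLp.inner_apply, hilbertSchmidtEquiv_apply, Fintype.sum_prod_type, trace, diag_apply,
    mul_apply, conjTranspose_apply, RCLike.inner_apply, RCLike.star_def, mul_comm]
  exact Finset.sum_comm

end Matrix

section MeasurementChannel

variable {ι k R : Type*} [Fintype ι] [Fintype k] [CommSemiring R] (P : ι → Matrix k k R)

def measurementChannel : Module.End R (Matrix k k R) where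
  toFun X := ∑ a, P a * X * P a
  map_add' X Y := by simp only [mul_add, add_mul, Finset.sum_add_distrib]
  map_smul' c X := by simp [Finset.smul_sum]

lemma measurementChannel_apply (X : Matrix k k R) : measurementChannel P X = ∑ a, P a * X * P a :=
  rfl

lemma isIdempotentElem_measurementChannel (hproj : ∀ a, P a * P a = P a)
    (horth : ∀ a b, a ≠ b → P a * P b = 0) : IsIdempotentElem (measurementChannel P) := by
  refine LinearMap.ext fun X => ?_
  simp only [Module.End.mul_apply, measurementChannel_apply, Finset.mul_sum, Finset.sum_mul]
  refine Finset.sum_congr rfl fun a _ => ?_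
  rw [Finset.sum_eq_single a (fun b _ hba => ?_) (by simp)]
  · calc P a * (P a * X * P a) * P a = (P a * P a) * X * (P a * P a) := by simp only [mul_assoc]
      _ = P a * X * P a := by rw [hproj]
  · calc P a * (P b * X * P b) * P a = (P a * P b) * X * (P b * P a) := by simp only [mul_assoc]
      _ = 0 := by rw [horth a b hba.symm, zero_mul, zero_mul]

lemma trace_conjTranspose_measurementChannel_mul [StarRing R] (hherm : ∀ a, (P a)ᴴ = P a)
    (X Y : Matrix k k R) :
    ((measurementChannel P X)ᴴ * Y).trace = (Xᴴ * measurementChannel P Y).trace := by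
  simp only [measurementChannel_apply, Matrix.conjTranspose_sum, Matrix.conjTranspose_mul, hherm,
    Finset.sum_mul, Finset.mul_sum, Matrix.trace_sum]
  refine Finset.sum_congr rfl fun a _ => ?_
  rw [mul_assoc, Matrix.trace_mul_comm]
  simp only [mul_assoc]

end MeasurementChannel

namespace LinearMap.IsSymmetricProjection

variable {𝕜 E : Type*} [RCLike 𝕜] [NormedAddCommGroup E] [InnerProductSpace 𝕜 E]
  {p : E →ₗ[𝕜] E}

lemma norm_apply_le (hp : p.IsSymmetricProjection) (x : E) : ‖p x‖ ≤ ‖x‖ := by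
  obtain ⟨K, _, rfl⟩ := isSymmetricProjection_iff_eq_coe_starProjection.mp hp
  exact K.norm_starProjection_apply_le x

lemma norm_apply_eq_iff (hp : p.IsSymmetricProjection) (x : E) : ‖p x‖ = ‖x‖ ↔ p x = x := by
  obtain ⟨K, _, rfl⟩ := isSymmetricProjection_iff_eq_coe_starProjection.mp hp
  exact (K.mem_iff_norm_starProjection x).symm.trans K.starProjection_eq_self_iff.symm

end LinearMap.IsSymmetricProjection

lemma traceAbsPow_two (X : Matrix n n ℂ) : traceAbsPow 2 X = (Xᴴ * X).trace.re := by
  have hX := posSemidef_conjTranspose_mul_self X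
  -- discharges the `IsSelfAdjoint` side conditions of `cfc_comp` and `cfc_id`
  have hA : IsSelfAdjoint (Xᴴ * X) := hX.1
  have hmatAbs : matAbs X = cfc Real.sqrt (Xᴴ * X) := by rw [hX.1.cfc_eq]; rfl
  rw [traceAbsPow, hmatAbs, ← cfc_comp (fun x : ℝ => x ^ (2 : ℝ)) Real.sqrt (Xᴴ * X),
    cfc_congr (g := id), cfc_id ℝ (Xᴴ * X)]
  intro x hx
  have hx₀ : 0 ≤ x := by
    open scoped MatrixOrder in exact spectrum_nonneg_of_nonneg hX.nonneg hx
  simp [Real.sq_sqrt hx₀]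

lemma schatten_two_eq_norm_hilbertSchmidtEquiv (X : Matrix n n ℂ) :
    schatten 2 X = ‖hilbertSchmidtEquiv X‖ := by
  rw [schatten, traceAbsPow_two, ← inner_hilbertSchmidtEquiv, ← RCLike.re_to_complex,
    inner_self_eq_norm_sq, ← Real.sqrt_eq_rpow, Real.sqrt_sq (norm_nonneg _)]

theorem schatten_two_apply_le_and_eq_iff {Φ : Module.End ℂ (Matrix n n ℂ)}
    (hidem : IsIdempotentElem Φ) (hsymm : ∀ X Y, ((Φ X)ᴴ * Y).trace = (Xᴴ * Φ Y).trace)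
    (ρ : Matrix n n ℂ) :
    schatten 2 (Φ ρ) ≤ schatten 2 ρ ∧ (schatten 2 (Φ ρ) = schatten 2 ρ ↔ Φ ρ = ρ) := by
  set e : Matrix n n ℂ ≃ₗ[ℂ] EuclideanSpace ℂ (n × n) := hilbertSchmidtEquiv
  have hp : (e.conj Φ).IsSymmetricProjection :=
    { isIdempotentElem := by
        rw [IsIdempotentElem, Module.End.mul_eq_comp, ← LinearEquiv.conj_comp,
          ← Module.End.mul_eq_comp, hidem.eq]
      isSymmetric := fun x y => by
        obtain ⟨X, rfl⟩ := e.surjective x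
        obtain ⟨Y, rfl⟩ := e.surjective y
        simp [LinearEquiv.conj_apply, e, inner_hilbertSchmidtEquiv, hsymm] }
  have happly : e.conj Φ (e ρ) = e (Φ ρ) := by simp
  simp only [schatten_two_eq_norm_hilbertSchmidtEquiv]
  rw [← happly]
  exact ⟨hp.norm_apply_le _, (hp.norm_apply_eq_iff _).trans (happly ▸ e.injective.eq_iff)⟩

theorem hilbertSchmidt_measurement_le_general
    {n ι : Type*} [Fintype n] [DecidableEq n] [Fintype ι]
    (P : ι → Matrix n n ℂ)
    (hproj : ∀ a, P a * P a = P a)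
    (hherm : ∀ a, (P a)ᴴ = P a)
    (horth : ∀ a b, a ≠ b → P a * P b = 0) :
    ∀ ρ : Matrix n n ℂ,
      schatten 2 (∑ a, P a * ρ * P a) ≤ schatten 2 ρ ∧
        (schatten 2 (∑ a, P a * ρ * P a) = schatten 2 ρ ↔ (∑ a, P a * ρ * P a) = ρ) :=
  schatten_two_apply_le_and_eq_iff (Φ := measurementChannel P)
    (isIdempotentElem_measurementChannel P hproj horth)
    (trace_conjTranspose_measurementChannel_mul P hherm)

/-- The Hilbert-Schmidt norm contracts under the non-selective measurement channel `Φ`,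
with equality iff the state is invariant. -/
theorem hilbertSchmidt_measurement_le
    {n ι : Type*} [Fintype n] [DecidableEq n] [Fintype ι]
    (P : ι → Matrix n n ℂ)
    (hproj : ∀ a, P a * P a = P a)
    (hherm : ∀ a, (P a)ᴴ = P a)
    (horth : ∀ a b, a ≠ b → P a * P b = 0)
    (hsum : ∑ a, P a = 1) :
    ∀ ρ : Matrix n n ℂ,
      schatten 2 (∑ a, P a * ρ * P a) ≤ schatten 2 ρ ∧
        (schatten 2 (∑ a, P a * ρ * P a) = schatten 2 ρ ↔ (∑ a, P a * ρ * P a) = ρ) :=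
  hilbertSchmidt_measurement_le_general P hproj hherm horth
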